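/- arXiv:1103.2338 — 2 statements merged into one kernel-verified Lean document; each statement's English description precedes it below -/
import Mathlib

section
/- (Eckart–Young, optimality) Let A ∈ ℝ^{m×n} have singular values σ₁ ≥ … ≥ σ_p and let k < rank(A). Then for every matrix B ∈ ℝ^{m×n} with rank(B) ≤ k, one has ‖A − B‖₂ ≥ σ_{k+1}. -/
open Matrix

/-- The spectral (L2 operator) norm of a real matrix. -/
noncomputable def matSpectralNorm {m n : ℕ} (M : Matrix (Fin m) (Fin n) ℝ) : ℝ :=
  ‖LinearMap.toContinuousLinearMap (Matrix.toEuclideanLin M)‖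

/-!
The first `k + 1` right singular vectors span a `(k + 1)`-dimensional space, which meets the
kernel of `B` nontrivially because `rank B ≤ k`. For `x = V c` in that intersection,
`(A - B) x = U S c`; as `U` and `V` are isometries and `c` is supported on the first `k + 1`
coordinates, `‖(A - B) x‖ = ‖S c‖ ≥ σ_{k+1} ‖c‖ = σ_{k+1} ‖x‖`.
-/

open Function WithLp

theorem EuclideanSpace.norm_toLp_extend_zero {𝕜 ι η : Type*} [RCLike 𝕜] [Fintype ι] [Fintype η]
    {s : ι → η} (hs : Injective s) (d : ι → 𝕜) :
    ‖toLp 2 (extend s d 0)‖ = ‖toLp 2 d‖ := by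
  rw [← sq_eq_sq₀ (norm_nonneg _) (norm_nonneg _), EuclideanSpace.norm_sq_eq,
    EuclideanSpace.norm_sq_eq]
  refine (Fintype.sum_of_injective s hs _ _ (fun j hj => ?_) (fun i => ?_)).symm
  · simp [extend_apply' _ _ _ hj]
  · simp [hs.extend_apply]

theorem EuclideanSpace.norm_toLp_mulVec_of_transpose_mul_self {p q : Type*} [Fintype p]
    [Fintype q] [DecidableEq q] {Q : Matrix p q ℝ} (hQ : Qᵀ * Q = 1) (y : q → ℝ) :
    ‖toLp 2 (Q *ᵥ y)‖ = ‖toLp 2 y‖ := by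
  have hdot : (Q *ᵥ y) ⬝ᵥ (Q *ᵥ y) = y ⬝ᵥ y := by
    rw [dotProduct_mulVec, ← mulVec_transpose, mulVec_mulVec, hQ, one_mulVec]
  rw [← sq_eq_sq₀ (norm_nonneg _) (norm_nonneg _), EuclideanSpace.real_norm_sq_eq,
    EuclideanSpace.real_norm_sq_eq]
  simpa [dotProduct, sq] using hdot

theorem EuclideanSpace.mul_norm_toLp_le_norm_toLp_mul {ι : Type*} [Fintype ι] {s d : ι → ℝ}
    {t : ℝ} (hs : ∀ i, t ≤ |s i|) :
    t * ‖toLp 2 d‖ ≤ ‖toLp 2 (fun i => s i * d i)‖ := by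
  rcases le_or_gt t 0 with ht | ht
  · exact (mul_nonpos_of_nonpos_of_nonneg ht (norm_nonneg _)).trans (norm_nonneg _)
  refine le_of_pow_le_pow_left₀ two_ne_zero (norm_nonneg _) ?_
  rw [mul_pow, EuclideanSpace.real_norm_sq_eq, EuclideanSpace.real_norm_sq_eq, Finset.mul_sum]
  refine Finset.sum_le_sum fun i _ => ?_
  rw [mul_pow, ← sq_abs (s i)]
  gcongr
  exact hs i

theorem Matrix.mulVec_extend_castLE_of_offDiag_eq_zero {R : Type*} [NonUnitalNonAssocSemiring R]
    {m n r : ℕ} {S : Matrix (Fin m) (Fin n) R}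
    (hS : ∀ (i : Fin m) (j : Fin n), (i : ℕ) ≠ j → S i j = 0) (hm : r ≤ m) (hn : r ≤ n)
    (d : Fin r → R) :
    S *ᵥ extend (Fin.castLE hn) d 0 =
      extend (Fin.castLE hm) (fun i => S (Fin.castLE hm i) (Fin.castLE hn i) * d i) 0 := by
  ext i
  have hsum :
      (S *ᵥ extend (Fin.castLE hn) d 0) i = ∑ j : Fin r, S i (Fin.castLE hn j) * d j := by
    refine (Fintype.sum_of_injective _ (Fin.castLE_injective hn) _ _
      (fun j hj => ?_) (fun j => ?_)).symm
    · simp [extend_apply' _ _ _ hj]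
    · simp [(Fin.castLE_injective hn).extend_apply]
  rw [hsum]
  by_cases hi : ∃ i', Fin.castLE hm i' = i
  · obtain ⟨i', rfl⟩ := hi
    rw [(Fin.castLE_injective hm).extend_apply]
    refine Finset.sum_eq_single i' (fun j _ hj => ?_) (by simp)
    rw [hS _ _ (by simpa [eq_comm, Fin.val_inj] using hj), zero_mul]
  · rw [extend_apply' _ _ _ hi, Pi.zero_apply]
    refine Finset.sum_eq_zero fun j _ => ?_
    rw [hS _ _ (fun h => hi ⟨j, Fin.ext (by simpa using h.symm)⟩), zero_mul]

theorem Matrix.exists_ne_zero_mulVec_eq_zero_of_rank_lt {K : Type*} [Field K] {m n r : ℕ}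
    (B : Matrix (Fin m) (Fin n) K) (W : (Fin r → K) →ₗ[K] (Fin n → K)) (h : B.rank < r) :
    ∃ d ≠ 0, B *ᵥ W d = 0 := by
  have hker : LinearMap.ker (B.mulVecLin ∘ₗ W).rangeRestrict ≠ ⊥ := by
    refine LinearMap.ker_ne_bot_of_finrank_lt ?_
    rw [Module.finrank_fin_fun]
    exact (Submodule.finrank_mono (LinearMap.range_comp_le_range W B.mulVecLin)).trans_lt h
  obtain ⟨d, hd, hd0⟩ := (Submodule.ne_bot_iff _).mp hker
  exact ⟨d, hd0, by simpa using hd⟩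

theorem le_matSpectralNorm_of_mul_norm_le {m n : ℕ} (M : Matrix (Fin m) (Fin n) ℝ)
    {x : Fin n → ℝ} (hx : x ≠ 0) {c : ℝ} (h : c * ‖toLp 2 x‖ ≤ ‖toLp 2 (M *ᵥ x)‖) :
    c ≤ matSpectralNorm M := by
  have hbound : ‖toLp 2 (M *ᵥ x)‖ ≤ matSpectralNorm M * ‖toLp 2 x‖ :=
    (LinearMap.toContinuousLinearMap (toEuclideanLin M)).le_opNorm (toLp 2 x)
  exact le_of_mul_le_mul_right (h.trans hbound) (by simpa using hx)

theorem eckart_young_spectral_lower_bound_general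
    (m n : ℕ) (A : Matrix (Fin m) (Fin n) ℝ)
    (U : Matrix (Fin m) (Fin m) ℝ) (S : Matrix (Fin m) (Fin n) ℝ)
    (V : Matrix (Fin n) (Fin n) ℝ) (σ : Fin (min m n) → ℝ)
    (hU : U * Uᵀ = 1) (hV : V * Vᵀ = 1)
    (hSoff : ∀ (i : Fin m) (j : Fin n), (i : ℕ) ≠ (j : ℕ) → S i j = 0)
    (hSdiag : ∀ k : Fin (min m n),
      S ⟨k, k.isLt.trans_le (min_le_left m n)⟩ ⟨k, k.isLt.trans_le (min_le_right m n)⟩ = σ k)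
    (hσmono : ∀ k l : Fin (min m n), k ≤ l → σ l ≤ σ k)
    (hA : A = U * S * Vᵀ)
    (k : ℕ) (hk : k < A.rank) :
    ∀ B : Matrix (Fin m) (Fin n) ℝ, B.rank ≤ k →
      σ ⟨k, lt_min (hk.trans_le A.rank_le_height) (hk.trans_le A.rank_le_width)⟩ ≤
        matSpectralNorm (A - B) := by
  intro B hB
  have hkp : k + 1 ≤ min m n :=
    lt_min (hk.trans_le A.rank_le_height) (hk.trans_le A.rank_le_width)
  have hkm : k + 1 ≤ m := hkp.trans (min_le_left m n)
  have hkn : k + 1 ≤ n := hkp.trans (min_le_right m n)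
  have hUU : Uᵀ * U = 1 := mul_eq_one_comm.mp hU
  have hVV : Vᵀ * V = 1 := mul_eq_one_comm.mp hV
  obtain ⟨d, hd, hBd⟩ := B.exists_ne_zero_mulVec_eq_zero_of_rank_lt
    (V.mulVecLin ∘ₗ ExtendByZero.linearMap ℝ (Fin.castLE hkn)) (Nat.lt_succ_of_le hB)
  set e := extend (Fin.castLE hkn) d 0
  have hAB : (A - B) *ᵥ (V *ᵥ e) = U *ᵥ (S *ᵥ e) := by
    rw [sub_mulVec, show B *ᵥ (V *ᵥ e) = 0 from hBd, sub_zero, hA, mulVec_mulVec,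
      Matrix.mul_assoc, hVV, Matrix.mul_one, mulVec_mulVec]
  have hnorm : ‖toLp 2 (V *ᵥ e)‖ = ‖toLp 2 d‖ := by
    rw [EuclideanSpace.norm_toLp_mulVec_of_transpose_mul_self hVV,
      EuclideanSpace.norm_toLp_extend_zero (Fin.castLE_injective hkn)]
  have hx : V *ᵥ e ≠ 0 := fun h0 => hd (by simpa [h0] using hnorm.symm)
  refine le_matSpectralNorm_of_mul_norm_le _ hx ?_
  rw [hAB, EuclideanSpace.norm_toLp_mulVec_of_transpose_mul_self hUU,
    S.mulVec_extend_castLE_of_offDiag_eq_zero hSoff hkm,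
    EuclideanSpace.norm_toLp_extend_zero (Fin.castLE_injective hkm), hnorm]
  refine EuclideanSpace.mul_norm_toLp_le_norm_toLp_mul fun i => ?_
  rw [show S (Fin.castLE hkm i) (Fin.castLE hkn i) = σ (Fin.castLE hkp i) from
    hSdiag (Fin.castLE hkp i)]
  exact (hσmono _ _ (Nat.le_of_lt_succ i.isLt)).trans (le_abs_self _)

/-- Eckart–Young (optimality): if A has singular values σ₁ ≥ σ₂ ≥ … and k < rank(A),
then every matrix B with rank(B) ≤ k satisfies ‖A - B‖₂ ≥ σ_{k+1}. -/
theorem eckart_young_spectral_lower_bound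
    (m n : ℕ) (A : Matrix (Fin m) (Fin n) ℝ)
    (U : Matrix (Fin m) (Fin m) ℝ) (S : Matrix (Fin m) (Fin n) ℝ)
    (V : Matrix (Fin n) (Fin n) ℝ) (σ : Fin (min m n) → ℝ)
    (hU : U * Uᵀ = 1) (hV : V * Vᵀ = 1)
    (hSoff : ∀ (i : Fin m) (j : Fin n), (i : ℕ) ≠ (j : ℕ) → S i j = 0)
    (hSdiag : ∀ k : Fin (min m n),
      S ⟨k, k.isLt.trans_le (min_le_left m n)⟩ ⟨k, k.isLt.trans_le (min_le_right m n)⟩ = σ k)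
    (hσnonneg : ∀ k, 0 ≤ σ k)
    (hσmono : ∀ k l : Fin (min m n), k ≤ l → σ l ≤ σ k)
    (hA : A = U * S * Vᵀ)
    (k : ℕ) (hk : k < A.rank) :
    ∀ B : Matrix (Fin m) (Fin n) ℝ, B.rank ≤ k →
      σ ⟨k, lt_min (hk.trans_le A.rank_le_height) (hk.trans_le A.rank_le_width)⟩ ≤
        matSpectralNorm (A - B) :=
  eckart_young_spectral_lower_bound_general m n A U S V σ hU hV hSoff hSdiag hσmono hA k hk
end

section
/- (Eckart–Young for Frobenius norm) If A has SVD with singular values σ₁ ≥ … ≥ σ_r > 0 and A_k is the k-truncated SVD sum (k < r), then ‖A − A_k‖_F² = Σ_{i=k+1}^r σᵢ², and this is minimal over all matrices of rank at most k. -/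
/-!
The tail `A - A_k = ∑_{l ≥ k} σ_l u_l v_lᵀ` has squared Frobenius norm `∑_{l ≥ k} σ_l²` by
orthonormality. For `B` of rank at most `k`, let `P` be the orthogonal projection onto the column
space of `B`, with orthonormal basis `w_1, …, w_{k'}`, `k' ≤ k`. Column by column,
`‖A - B‖² ≥ ‖A - PA‖² = ‖A‖² - ∑_t ‖Aᵀ w_t‖² = ∑_l σ_l² (1 - T_l)` with `T_l = ∑_t ⟪w_t, u_l⟫²`.
Bessel's inequality, applied to each of the two orthonormal families, gives `0 ≤ T_l ≤ 1` and
`∑_l T_l ≤ k`; as `σ_l²` decreases, `∑_l σ_l² T_l` is then at most `∑_{l < k} σ_l²`.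
-/

open Matrix

theorem sum_mul_le_sum_of_threshold {ι : Type*} [Fintype ι] {s T : ι → ℝ} {K : Finset ι} {c : ℝ}
    (hc : 0 ≤ c) (hK : ∀ l ∈ K, c ≤ s l) (hKc : ∀ l ∉ K, s l ≤ c) (hT0 : ∀ l, 0 ≤ T l)
    (hT1 : ∀ l, T l ≤ 1) (hT : ∑ l, T l ≤ K.card) :
    ∑ l, s l * T l ≤ ∑ l ∈ K, s l := by
  classical
  have hTc : ∑ l ∈ Kᶜ, T l ≤ ∑ l ∈ K, (1 - T l) := by
    rw [← Finset.sum_add_sum_compl K T] at hT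
    rw [Finset.sum_sub_distrib, Finset.sum_const, nsmul_one]
    linarith
  calc ∑ l, s l * T l = ∑ l ∈ K, s l * T l + ∑ l ∈ Kᶜ, s l * T l :=
        (Finset.sum_add_sum_compl K _).symm
    _ ≤ ∑ l ∈ K, s l * T l + ∑ l ∈ K, c * (1 - T l) := by
        rw [← Finset.mul_sum]
        gcongr
        calc ∑ l ∈ Kᶜ, s l * T l ≤ ∑ l ∈ Kᶜ, c * T l := by
              gcongr with l hl
              · exact hT0 l
              · exact hKc l (Finset.mem_compl.mp hl)
          _ ≤ c * ∑ l ∈ K, (1 - T l) := by rw [← Finset.mul_sum]; gcongr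
    _ ≤ ∑ l ∈ K, s l * T l + ∑ l ∈ K, s l * (1 - T l) := by
        gcongr with l hl
        · exact sub_nonneg.mpr (hT1 l)
        · exact hK l hl
    _ = ∑ l ∈ K, s l := by rw [← Finset.sum_add_distrib]; simp [← mul_add]

theorem Antitone.sum_mul_le_sum_filter_lt {r k : ℕ} {s T : Fin r → ℝ} (hs : Antitone s)
    (hs0 : ∀ l, 0 ≤ s l) (hT0 : ∀ l, 0 ≤ T l) (hT1 : ∀ l, T l ≤ 1) (hT : ∑ l, T l ≤ k) :
    ∑ l, s l * T l ≤ ∑ l ∈ Finset.univ.filter (fun l : Fin r => (l : ℕ) < k), s l := by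
  have hT_card : ∑ l, T l ≤ (Finset.univ.filter (fun l : Fin r => (l : ℕ) < k)).card := by
    have hTr : ∑ l, T l ≤ r := by
      simpa using Finset.sum_le_sum fun l (_ : l ∈ Finset.univ) => hT1 l
    rw [Fin.card_filter_val_lt, Nat.cast_min]
    exact le_min hTr hT
  by_cases hk : k < r
  · refine sum_mul_le_sum_of_threshold (hs0 ⟨k, hk⟩) (fun l hl => hs ?_) (fun l hl => hs ?_)
      hT0 hT1 hT_card
    · simp only [Finset.mem_filter, Finset.mem_univ, true_and] at hl
      exact Fin.mk_le_of_le_val hl.le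
    · simp only [Finset.mem_filter, Finset.mem_univ, true_and, not_lt] at hl
      exact Fin.le_iff_val_le_val.mpr hl
  · refine sum_mul_le_sum_of_threshold le_rfl (fun l _ => hs0 l) (fun l hl => ?_) hT0 hT1 hT_card
    simp only [Finset.mem_filter, Finset.mem_univ, true_and] at hl
    omega

section InnerProductSpace

variable {E : Type*} [NormedAddCommGroup E] [InnerProductSpace ℝ E] {ι : Type*}

theorem Orthonormal.sq_norm_sum_smul {e : ι → E} (he : Orthonormal ℝ e) (c : ι → ℝ)
    (s : Finset ι) : ‖∑ l ∈ s, c l • e l‖ ^ 2 = ∑ l ∈ s, c l ^ 2 := by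
  rw [← real_inner_self_eq_norm_sq, he.inner_sum]
  simp [sq]

theorem Orthonormal.sum_inner_sq_le_one [Fintype ι] {e : ι → E} (he : Orthonormal ℝ e) {x : E}
    (hx : ‖x‖ = 1) : ∑ t, inner ℝ (e t) x ^ 2 ≤ 1 := by
  simpa [hx] using he.sum_inner_products_le x (s := Finset.univ)

theorem Submodule.sq_norm_sub_sq_norm_starProjection_le (K : Submodule ℝ E)
    [K.HasOrthogonalProjection] (x : E) {y : E} (hy : y ∈ K) :
    ‖x‖ ^ 2 - ‖K.starProjection x‖ ^ 2 ≤ ‖x - y‖ ^ 2 := by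
  have pythagoras : ∀ z ∈ K,
      ‖x - z‖ ^ 2 = ‖x - K.starProjection x‖ ^ 2 + ‖K.starProjection x - z‖ ^ 2 := by
    intro z hz
    rw [← sub_add_sub_cancel x (K.starProjection x) z, sq, sq, sq,
      norm_add_sq_eq_norm_sq_add_norm_sq_real]
    exact K.starProjection_inner_eq_zero x _ (K.sub_mem (K.starProjection_apply_mem x) hz)
  have hx := pythagoras 0 K.zero_mem
  rw [sub_zero, sub_zero] at hx
  rw [pythagoras y hy, hx]
  nlinarith [sq_nonneg ‖K.starProjection x - y‖]

theorem OrthonormalBasis.sq_norm_starProjection [Fintype ι] {K : Submodule ℝ E}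
    [K.HasOrthogonalProjection] (b : OrthonormalBasis ι ℝ K) (x : E) :
    ‖K.starProjection x‖ ^ 2 = ∑ t, inner ℝ (b t : E) x ^ 2 := by
  rw [K.starProjection_apply, Submodule.norm_coe, ← b.sum_sq_norm_inner_right]
  simp

theorem Orthonormal.sum_sum_mul_inner_sq_le {r k : ℕ} [Fintype ι] {u : Fin r → E}
    (hu : Orthonormal ℝ u) {w : ι → E} (hw : Orthonormal ℝ w) (hcard : Fintype.card ι ≤ k)
    {s : Fin r → ℝ} (hs : Antitone s) (hs0 : ∀ l, 0 ≤ s l) :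
    ∑ t, ∑ l, s l * inner ℝ (w t) (u l) ^ 2 ≤
      ∑ l ∈ Finset.univ.filter (fun l : Fin r => (l : ℕ) < k), s l := by
  rw [Finset.sum_comm]
  simp_rw [← Finset.mul_sum]
  refine hs.sum_mul_le_sum_filter_lt hs0 (fun l => Finset.sum_nonneg fun t _ => sq_nonneg _)
    (fun l => hw.sum_inner_sq_le_one (hu.1 l)) ?_
  calc ∑ l, ∑ t, inner ℝ (w t) (u l) ^ 2 = ∑ t, ∑ l, inner ℝ (u l) (w t) ^ 2 := by
        rw [Finset.sum_comm]; simp_rw [real_inner_comm]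
    _ ≤ ∑ t : ι, 1 := Finset.sum_le_sum fun t _ => hu.sum_inner_sq_le_one (hw.1 t)
    _ ≤ k := by simpa using hcard

end InnerProductSpace

theorem orthonormal_toLp_iff {ι m : Type*} [Fintype m] [DecidableEq ι] {u : ι → m → ℝ} :
    Orthonormal ℝ (fun l => (WithLp.toLp 2 (u l) : EuclideanSpace ℝ m)) ↔
      ∀ i j, u i ⬝ᵥ u j = if i = j then 1 else 0 := by
  rw [orthonormal_iff_ite]
  simp [EuclideanSpace.inner_eq_star_dotProduct, dotProduct_comm]

namespace Matrix

variable {m n ι : Type*}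

theorem sum_sq_eq_sum_sq_norm_col [Fintype m] [Fintype n] (X : Matrix m n ℝ) :
    ∑ i, ∑ j, X i j ^ 2 = ∑ j, ‖WithLp.toLp 2 (X.col j)‖ ^ 2 := by
  simp_rw [EuclideanSpace.real_norm_sq_eq]
  exact Finset.sum_comm

theorem toLp_col_sum_smul_vecMulVec (σ : ι → ℝ) (u : ι → m → ℝ) (v : ι → n → ℝ)
    (s : Finset ι) (j : n) :
    WithLp.toLp 2 ((∑ l ∈ s, σ l • vecMulVec (u l) (v l)).col j) =
      ∑ l ∈ s, (σ l * v l j) • (WithLp.toLp 2 (u l) : EuclideanSpace ℝ m) := by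
  ext i
  simp [Matrix.col, Matrix.sum_apply, vecMulVec_apply, mul_assoc, mul_comm (u _ _)]

theorem finrank_span_toLp_col [Fintype n] (B : Matrix m n ℝ) :
    Module.finrank ℝ (Submodule.span ℝ
      (Set.range fun j => (WithLp.toLp 2 (B.col j) : EuclideanSpace ℝ m))) = B.rank := by
  rw [rank_eq_finrank_span_cols,
    ← LinearEquiv.finrank_map_eq (WithLp.linearEquiv 2 ℝ (m → ℝ)).symm, Submodule.map_span,
    ← Set.range_comp]
  rfl

variable [Fintype m] [Fintype n] {σ : ι → ℝ} {u : ι → m → ℝ} {v : ι → n → ℝ}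

theorem sum_sq_sum_smul_vecMulVec
    (hu : Orthonormal ℝ fun l => (WithLp.toLp 2 (u l) : EuclideanSpace ℝ m))
    (hv : Orthonormal ℝ fun l => (WithLp.toLp 2 (v l) : EuclideanSpace ℝ n)) (s : Finset ι) :
    ∑ i, ∑ j, (∑ l ∈ s, σ l • vecMulVec (u l) (v l)) i j ^ 2 = ∑ l ∈ s, σ l ^ 2 := by
  have hv_norm : ∀ l, ∑ j, v l j ^ 2 = 1 := fun l => by
    simpa [hv.1 l] using (EuclideanSpace.real_norm_sq_eq (WithLp.toLp 2 (v l))).symm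
  simp_rw [sum_sq_eq_sum_sq_norm_col, toLp_col_sum_smul_vecMulVec, hu.sq_norm_sum_smul, mul_pow]
  rw [Finset.sum_comm]
  simp [← Finset.mul_sum, hv_norm]

theorem sum_sq_inner_toLp_col_sum_smul_vecMulVec [Fintype ι]
    (hv : Orthonormal ℝ fun l => (WithLp.toLp 2 (v l) : EuclideanSpace ℝ n))
    (x : EuclideanSpace ℝ m) :
    ∑ j, inner ℝ x (WithLp.toLp 2 ((∑ l, σ l • vecMulVec (u l) (v l)).col j)) ^ 2 =
      ∑ l, σ l ^ 2 * inner ℝ x (WithLp.toLp 2 (u l)) ^ 2 := by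
  have hcoord : ∀ j, inner ℝ x (WithLp.toLp 2 ((∑ l, σ l • vecMulVec (u l) (v l)).col j)) =
      (∑ l, (σ l * inner ℝ x (WithLp.toLp 2 (u l))) •
        (WithLp.toLp 2 (v l) : EuclideanSpace ℝ n)) j := by
    simp [toLp_col_sum_smul_vecMulVec, inner_sum, inner_smul_right, mul_right_comm]
  simp_rw [hcoord, ← EuclideanSpace.real_norm_sq_eq, hv.sq_norm_sum_smul, mul_pow]

theorem sum_sq_norm_col_sub_sum_sq_inner_le (X B : Matrix m n ℝ) {κ : Type*} [Fintype κ]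
    (b : OrthonormalBasis κ ℝ (Submodule.span ℝ
      (Set.range fun j => (WithLp.toLp 2 (B.col j) : EuclideanSpace ℝ m)))) :
    ∑ j, ‖WithLp.toLp 2 (X.col j)‖ ^ 2 -
        ∑ t, ∑ j, inner ℝ (b t : EuclideanSpace ℝ m) (WithLp.toLp 2 (X.col j)) ^ 2 ≤
      ∑ i, ∑ j, (X - B) i j ^ 2 := by
  rw [sum_sq_eq_sum_sq_norm_col, Finset.sum_comm, ← Finset.sum_sub_distrib]
  refine Finset.sum_le_sum fun j _ => ?_
  have hcol : WithLp.toLp 2 ((X - B).col j) =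
      (WithLp.toLp 2 (X.col j) - WithLp.toLp 2 (B.col j) : EuclideanSpace ℝ m) := rfl
  rw [hcol, ← b.sq_norm_starProjection]
  exact Submodule.sq_norm_sub_sq_norm_starProjection_le _ _ (Submodule.subset_span ⟨j, rfl⟩)

theorem sum_sq_le_sum_sq_sub_add_sum_filter_lt {r k : ℕ} {σ : Fin r → ℝ}
    {u : Fin r → m → ℝ} {v : Fin r → n → ℝ}
    (hu : Orthonormal ℝ fun l => (WithLp.toLp 2 (u l) : EuclideanSpace ℝ m))
    (hv : Orthonormal ℝ fun l => (WithLp.toLp 2 (v l) : EuclideanSpace ℝ n))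
    (hσ : Antitone fun l => σ l ^ 2) {B : Matrix m n ℝ} (hB : B.rank ≤ k) :
    ∑ l, σ l ^ 2 ≤ ∑ i, ∑ j, ((∑ l, σ l • vecMulVec (u l) (v l)) - B) i j ^ 2 +
      ∑ l ∈ Finset.univ.filter (fun l : Fin r => (l : ℕ) < k), σ l ^ 2 := by
  set K := Submodule.span ℝ (Set.range fun j => (WithLp.toLp 2 (B.col j) : EuclideanSpace ℝ m))
  let b := stdOrthonormalBasis ℝ K
  have hb : Orthonormal ℝ fun t => (b t : EuclideanSpace ℝ m) :=
    b.orthonormal.comp_linearIsometry K.subtypeₗᵢ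
  have hcard : Fintype.card (Fin (Module.finrank ℝ K)) ≤ k := by
    simpa [K, finrank_span_toLp_col] using hB
  have hproj := sum_sq_norm_col_sub_sum_sq_inner_le (∑ l, σ l • vecMulVec (u l) (v l)) B b
  have hkyfan := hu.sum_sum_mul_inner_sq_le hb hcard hσ fun l => sq_nonneg _
  rw [← sum_sq_eq_sum_sq_norm_col, sum_sq_sum_smul_vecMulVec hu hv] at hproj
  simp_rw [sum_sq_inner_toLp_col_sum_smul_vecMulVec hv] at hproj
  linarith

end Matrix

theorem eckart_young_frobenius_general
    (m n r : ℕ) (A : Matrix (Fin m) (Fin n) ℝ)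
    (σ : Fin r → ℝ) (u : Fin r → Fin m → ℝ) (v : Fin r → Fin n → ℝ)
    (hu : ∀ i j : Fin r, (∑ l, u i l * u j l) = if i = j then 1 else 0)
    (hv : ∀ i j : Fin r, (∑ l, v i l * v j l) = if i = j then 1 else 0)
    (hσpos : ∀ i, 0 < σ i)
    (hσmono : ∀ i j : Fin r, i ≤ j → σ j ≤ σ i)
    (hA : A = ∑ i, σ i • vecMulVec (u i) (v i))
    (k : ℕ) :
    (∑ i, ∑ j, ((A - ∑ l ∈ Finset.univ.filter (fun l : Fin r => (l : ℕ) < k),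
          σ l • vecMulVec (u l) (v l)) i j) ^ 2) =
        (∑ l ∈ Finset.univ.filter (fun l : Fin r => k ≤ (l : ℕ)), σ l ^ 2) ∧
      ∀ B : Matrix (Fin m) (Fin n) ℝ, B.rank ≤ k →
        (∑ i, ∑ j, ((A - ∑ l ∈ Finset.univ.filter (fun l : Fin r => (l : ℕ) < k),
            σ l • vecMulVec (u l) (v l)) i j) ^ 2) ≤ ∑ i, ∑ j, ((A - B) i j) ^ 2 := by
  have hu' := orthonormal_toLp_iff.mpr hu
  have hv' := orthonormal_toLp_iff.mpr hv
  have hσ_sq : Antitone fun l => σ l ^ 2 := fun i j hij =>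
    pow_le_pow_left₀ (hσpos j).le (hσmono i j hij) 2
  have hsplit : ∀ {M : Type} [AddCommMonoid M] (f : Fin r → M),
      ∑ l ∈ Finset.univ.filter (fun l : Fin r => (l : ℕ) < k), f l +
        ∑ l ∈ Finset.univ.filter (fun l : Fin r => k ≤ (l : ℕ)), f l = ∑ l, f l := fun f => by
    simpa only [not_lt] using
      Finset.sum_filter_add_sum_filter_not Finset.univ (fun l : Fin r => (l : ℕ) < k) f
  have htail : ∑ i, ∑ j, ((A - ∑ l ∈ Finset.univ.filter (fun l : Fin r => (l : ℕ) < k),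
        σ l • vecMulVec (u l) (v l)) i j) ^ 2 =
      ∑ l ∈ Finset.univ.filter (fun l : Fin r => k ≤ (l : ℕ)), σ l ^ 2 := by
    rw [hA, ← hsplit, add_sub_cancel_left]
    exact sum_sq_sum_smul_vecMulVec hu' hv' _
  refine ⟨htail, fun B hB => ?_⟩
  have hlower := sum_sq_le_sum_sq_sub_add_sum_filter_lt hu' hv' hσ_sq hB
  rw [← hA, ← hsplit] at hlower
  linarith

/-- Eckart–Young for the Frobenius norm: the k-truncated SVD A_k satisfies
‖A - A_k‖_F² = Σ_{i>k} σᵢ², and A_k minimizes the Frobenius distance to A among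
all matrices of rank at most k. -/
theorem eckart_young_frobenius
    (m n r : ℕ) (A : Matrix (Fin m) (Fin n) ℝ)
    (σ : Fin r → ℝ) (u : Fin r → Fin m → ℝ) (v : Fin r → Fin n → ℝ)
    (hu : ∀ i j : Fin r, (∑ l, u i l * u j l) = if i = j then 1 else 0)
    (hv : ∀ i j : Fin r, (∑ l, v i l * v j l) = if i = j then 1 else 0)
    (hσpos : ∀ i, 0 < σ i)
    (hσmono : ∀ i j : Fin r, i ≤ j → σ j ≤ σ i)
    (hA : A = ∑ i, σ i • vecMulVec (u i) (v i))
    (k : ℕ) (hk : k < r) :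
    (∑ i, ∑ j, ((A - ∑ l ∈ Finset.univ.filter (fun l : Fin r => (l : ℕ) < k),
          σ l • vecMulVec (u l) (v l)) i j) ^ 2) =
        (∑ l ∈ Finset.univ.filter (fun l : Fin r => k ≤ (l : ℕ)), σ l ^ 2) ∧
      ∀ B : Matrix (Fin m) (Fin n) ℝ, B.rank ≤ k →
        (∑ i, ∑ j, ((A - ∑ l ∈ Finset.univ.filter (fun l : Fin r => (l : ℕ) < k),
            σ l • vecMulVec (u l) (v l)) i j) ^ 2) ≤ ∑ i, ∑ j, ((A - B) i j) ^ 2 :=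
  eckart_young_frobenius_general m n r A σ u v hu hv hσpos hσmono hA k
end
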